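/- For every Sturmian word s and every n ≥ 1, L_s(n) ≤ 2. -/

import Mathlib

/-!
Let `n = m + 1`. A conjugacy class all of whose members are factors contains a word `t ++ [b]`
with `t` right special: otherwise each occurrence of a rotation would force the next letter, so the
word would be eventually periodic and have bounded complexity. Since `p(m + 1) - p(m) = 1` there is
only one right-special factor `t` of length `m`, so the class is determined by the letter `b`.
-/

/-- `u` is a factor of the right-infinite word `w`. -/
def IsFactor {α : Type*} (w : ℕ → α) (u : List α) : Prop :=
  ∃ i : ℕ, u = (List.range u.length).map fun j => w (i + j)

/-- Factor complexity: the number of factors of `w` of length `n`. -/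
noncomputable def factorComplexity {α : Type*} (w : ℕ → α) (n : ℕ) : ℕ :=
  Set.ncard {u : List α | u.length = n ∧ IsFactor w u}

/-- The conjugacy (rotation) class of a finite word. -/
def conjClass {α : Type*} (u : List α) : Set (List α) :=
  {v | ∃ i : ℕ, v = u.rotate i}

/-- Lie complexity: the number of conjugacy classes of words of length `n`
all of whose elements are factors of `w`. -/
noncomputable def lieComplexity {α : Type*} (w : ℕ → α) (n : ℕ) : ℕ :=
  Set.ncard {C : Set (List α) | ∃ u : List α, u.length = n ∧
    (∀ i : ℕ, IsFactor w (u.rotate i)) ∧ C = conjClass u}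

section

variable {α : Type*} {w : ℕ → α}

def window (w : ℕ → α) (i m : ℕ) : List α :=
  (List.range m).map fun j => w (i + j)

@[simp]
lemma length_window (i m : ℕ) : (window w i m).length = m := by
  simp [window]

lemma window_succ (i m : ℕ) : window w i (m + 1) = w i :: window w (i + 1) m := by
  simp [window, List.range_succ_eq_map, Function.comp_def, Nat.add_assoc, Nat.add_comm 1]

lemma window_succ' (i m : ℕ) : window w i (m + 1) = window w i m ++ [w (i + m)] := by
  simp [window, List.range_succ]

lemma isFactor_window (i m : ℕ) : IsFactor w (window w i m) :=
  ⟨i, by rw [length_window]; rfl⟩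

lemma IsFactor.exists_append_singleton {t : List α} (h : IsFactor w t) :
    ∃ b, IsFactor w (t ++ [b]) := by
  obtain ⟨i, hi⟩ := h
  refine ⟨w (i + t.length), ?_⟩
  have : t ++ [w (i + t.length)] = window w i (t.length + 1) := by
    rw [window_succ']; exact congrArg (· ++ _) hi
  exact this ▸ isFactor_window _ _

def factorsOfLength (w : ℕ → α) (m : ℕ) : Set (List α) :=
  {u | u.length = m ∧ IsFactor w u}

lemma factorComplexity_le_of_periodic {i p : ℕ} (hp : Function.Periodic (fun k => w (i + k)) p)
    (hp0 : 0 < p) (N : ℕ) : factorComplexity w N ≤ i + p := by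
  have hsub : factorsOfLength w N ⊆ (fun j => window w j N) '' Set.Iio (i + p) := by
    rintro u ⟨rfl, j, hj⟩
    by_cases hjlt : j < i + p
    · exact ⟨j, hjlt, hj.symm⟩
    · refine ⟨i + (j - i) % p, by have := Nat.mod_lt (j - i) hp0; simp; omega, ?_⟩
      show window w _ u.length = u
      conv_rhs => rw [hj]
      refine List.map_congr_left fun l _ => ?_
      have h₁ := hp.map_mod_nat ((j - i) % p + l)
      have h₂ := hp.map_mod_nat (j - i + l)
      simp only [Nat.mod_add_mod] at h₁
      rw [show j + l = i + (j - i + l) by omega, Nat.add_assoc]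
      exact h₁.symm.trans h₂
  calc factorComplexity w N ≤ ((fun j => window w j N) '' Set.Iio (i + p)).ncard :=
        Set.ncard_le_ncard hsub ((Set.finite_Iio _).image _)
    _ ≤ (Set.Iio (i + p)).ncard := Set.ncard_image_le (Set.finite_Iio _)
    _ = i + p := by simp

def IsRightSpecial (w : ℕ → α) (t : List α) : Prop :=
  ∃ b c, b ≠ c ∧ IsFactor w (t ++ [b]) ∧ IsFactor w (t ++ [c])

lemma IsRightSpecial.exists_ne {t : List α} (h : IsRightSpecial w t) (c : α) :
    ∃ b ≠ c, IsFactor w (t ++ [b]) := by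
  obtain ⟨b, b', hbb', hb, hb'⟩ := h
  by_cases hbc : b = c
  · exact ⟨b', hbc ▸ hbb'.symm, hb'⟩
  · exact ⟨b, hbc, hb⟩

/-- Extend every factor of length `m` by one chosen letter; the two right-special factors have
extensions that are missed. -/
lemma factorComplexity_add_two_le {m : ℕ} {t₁ t₂ : List α} (ht₁ : t₁.length = m)
    (ht₂ : t₂.length = m) (hne : t₁ ≠ t₂) (h₁ : IsRightSpecial w t₁) (h₂ : IsRightSpecial w t₂)
    (hfin : (factorsOfLength w (m + 1)).Finite) :
    factorComplexity w m + 2 ≤ factorComplexity w (m + 1) := by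
  have : Nonempty α := ⟨w 0⟩
  set e : List α → α := fun t => Classical.epsilon fun b => IsFactor w (t ++ [b])
  obtain ⟨c₁, hc₁, hc₁f⟩ := h₁.exists_ne (e t₁)
  obtain ⟨c₂, hc₂, hc₂f⟩ := h₂.exists_ne (e t₂)
  set R : Set (List α) := {t₁ ++ [c₁], t₂ ++ [c₂]}
  have hR : R ⊆ factorsOfLength w (m + 1) := by
    rintro v (rfl | rfl)
    exacts [⟨by simp [ht₁], hc₁f⟩, ⟨by simp [ht₂], hc₂f⟩]
  have hRcard : R.ncard = 2 :=
    Set.ncard_pair fun h => hne (List.append_inj h (by simp [ht₁, ht₂])).1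
  have hmaps : ∀ t ∈ factorsOfLength w m, t ++ [e t] ∈ factorsOfLength w (m + 1) \ R := by
    rintro t ⟨rfl, ht⟩
    refine ⟨⟨by simp, Classical.epsilon_spec ht.exists_append_singleton⟩, ?_⟩
    rintro (h | h) <;> obtain ⟨rfl, hlast⟩ := List.append_inj h (by simp [*])
    exacts [hc₁ (List.singleton_inj.mp hlast).symm, hc₂ (List.singleton_inj.mp hlast).symm]
  have hinj : Set.InjOn (fun t => t ++ [e t]) (factorsOfLength w m) := by
    rintro t ⟨ht, -⟩ t' ⟨ht', -⟩ h
    exact (List.append_inj h (ht.trans ht'.symm)).1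
  have hle := Set.ncard_le_ncard_of_injOn _ hmaps hinj hfin.sdiff
  have hsplit := Set.ncard_sdiff_add_ncard_of_subset hR hfin
  change (factorsOfLength w m).ncard + 2 ≤ (factorsOfLength w (m + 1)).ncard
  omega

lemma IsRightSpecial.eq_of_length_eq {m : ℕ}
    (hw : factorComplexity w (m + 1) = factorComplexity w m + 1) {t₁ t₂ : List α}
    (h₁ : IsRightSpecial w t₁) (h₂ : IsRightSpecial w t₂) (ht₁ : t₁.length = m)
    (ht₂ : t₂.length = m) : t₁ = t₂ := by
  by_contra hne
  have := factorComplexity_add_two_le ht₁ ht₂ hne h₁ h₂ (Set.finite_of_ncard_ne_zero (by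
    change factorComplexity w (m + 1) ≠ 0; omega))
  omega

lemma eq_of_dropLast_eq_of_not_isRightSpecial {u v : List α} (hu : IsFactor w u)
    (hv : IsFactor w v) (hu₀ : u ≠ []) (hv₀ : v ≠ []) (h : u.dropLast = v.dropLast)
    (hns : ¬IsRightSpecial w u.dropLast) : u = v := by
  have hlast : u.getLast hu₀ = v.getLast hv₀ := by
    by_contra hne
    refine hns ⟨_, _, hne, ?_, ?_⟩
    · rwa [List.dropLast_append_getLast]
    · rw [h, List.dropLast_append_getLast]; exact hv
  rw [← List.dropLast_append_getLast hu₀, ← List.dropLast_append_getLast hv₀, h, hlast]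

/-- If no rotation of `u` ended in a right-special factor, each occurrence of a rotation of `u`
would force the next letter, making `w` eventually periodic. -/
lemma exists_isRightSpecial_dropLast_rotate (hw : ∀ N, N < factorComplexity w N) {u : List α}
    (hu : u ≠ []) (hrot : ∀ k, IsFactor w (u.rotate k)) :
    ∃ k, IsRightSpecial w (u.rotate k).dropLast := by
  by_contra! hns
  obtain ⟨n, hn⟩ : ∃ n, u.length = n + 1 := Nat.exists_eq_succ_of_ne_zero (by simpa using hu)
  obtain ⟨i, hi⟩ : ∃ i, u = window w i (n + 1) := hn ▸ List.rotate_zero u ▸ hrot 0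
  have hwin : ∀ k, u.rotate k = window w (i + k) (n + 1) := by
    intro k
    induction k with
    | zero => simpa using hi
    | succ k ih =>
      refine eq_of_dropLast_eq_of_not_isRightSpecial (hrot (k + 1)) (isFactor_window _ _)
        (by simpa using hu) (by simp [window_succ]) ?_ (hns (k + 1))
      rw [← List.rotate_rotate, ih, window_succ, List.rotate_cons_succ, List.rotate_zero,
        window_succ', List.dropLast_concat, List.dropLast_concat, Nat.add_assoc]
  have hper : Function.Periodic (fun k => w (i + k)) (n + 1) := by
    intro k
    have h : window w (i + (k + (n + 1))) (n + 1) = window w (i + k) (n + 1) := by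
      rw [← hwin, ← hwin, ← List.rotate_rotate, ← hn, ← List.length_rotate u k,
        List.rotate_length]
    rw [window_succ, window_succ] at h
    exact (List.cons.inj h).1
  have := factorComplexity_le_of_periodic hper n.succ_pos (i + (n + 1))
  have := hw (i + (n + 1))
  omega

lemma mem_conjClass_iff {u v : List α} : v ∈ conjClass u ↔ u ~r v := by
  simp only [conjClass, Set.mem_ofPred_eq, List.IsRotated, eq_comm]

lemma conjClass_rotate (u : List α) (k : ℕ) : conjClass (u.rotate k) = conjClass u := by
  ext v
  simp only [mem_conjClass_iff]
  exact ⟨(List.IsRotated.forall u k).symm.trans, (List.IsRotated.forall u k).trans⟩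

lemma exists_isRightSpecial_conjClass_eq (hw : ∀ N, N < factorComplexity w N) {u : List α}
    (hu : u ≠ []) (hrot : ∀ k, IsFactor w (u.rotate k)) :
    ∃ t b, IsRightSpecial w t ∧ t.length + 1 = u.length ∧ conjClass u = conjClass (t ++ [b]) := by
  obtain ⟨k, hk⟩ := exists_isRightSpecial_dropLast_rotate hw hu hrot
  have hk₀ : u.rotate k ≠ [] := by simpa using hu
  refine ⟨_, (u.rotate k).getLast hk₀, hk, ?_, ?_⟩
  · simp only [List.length_dropLast, List.length_rotate]
    have := List.length_pos_iff.mpr hu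
    omega
  · rw [List.dropLast_append_getLast, conjClass_rotate]

theorem lieComplexity_succ_le_card [Finite α] (hw : ∀ n, factorComplexity w n = n + 1)
    (m : ℕ) : lieComplexity w (m + 1) ≤ Nat.card α := by
  set S := {C : Set (List α) | ∃ u : List α, u.length = m + 1 ∧
    (∀ i : ℕ, IsFactor w (u.rotate i)) ∧ C = conjClass u}
  have hS : ∀ C ∈ S, ∃ t b, IsRightSpecial w t ∧ t.length = m ∧ C = conjClass (t ++ [b]) := by
    rintro C ⟨u, hu, hrot, rfl⟩
    obtain ⟨t, b, ht, htu, hC⟩ := exists_isRightSpecial_conjClass_eq (by simp [hw])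
      (List.ne_nil_of_length_eq_add_one hu) hrot
    exact ⟨t, b, ht, by omega, hC⟩
  change S.ncard ≤ _
  rcases S.eq_empty_or_nonempty with hS₀ | ⟨C₀, hC₀⟩
  · simp [hS₀]
  obtain ⟨t₀, -, ht₀, ht₀m, -⟩ := hS C₀ hC₀
  have hsub : S ⊆ Set.range fun b => conjClass (t₀ ++ [b]) := by
    intro C hC
    obtain ⟨t, b, ht, htm, rfl⟩ := hS C hC
    exact ⟨b, by rw [ht₀.eq_of_length_eq (by simp [hw]) ht ht₀m htm]⟩
  calc S.ncard ≤ (Set.range fun b => conjClass (t₀ ++ [b])).ncard :=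
        Set.ncard_le_ncard hsub (Set.finite_range _)
    _ ≤ Nat.card α := Finite.card_range_le _

end

/-- For a Sturmian word `s`, the Lie complexity is at most `2`. -/
theorem lieComplexity_sturmian_le_two (s : ℕ → Fin 2)
    (hs : ∀ n : ℕ, factorComplexity s n = n + 1) :
    ∀ n : ℕ, 1 ≤ n → lieComplexity s n ≤ 2 := by
  intro n hn
  obtain ⟨m, rfl⟩ := Nat.exists_eq_add_of_le' hn
  simpa using lieComplexity_succ_le_card hs m
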